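/- For every integer m ≥ 2 and positive integer n: A_m(n) = ∑_{k=1}^{m−2} B_m^{(k)}(n) + C_m(n+1), where A_m(n) is the number of partitions of n with each part occurring fewer than m times, B_m^{(k)}(n) is the number of partitions of n into parts not divisible by m with largest part ≡ k (mod m), and C_m(n) is the number of partitions of n with largest part m·j and all parts ≤ j occurring fewer than m times. -/

import Mathlib

/-!
Write every positive integer as `m ^ i * x` with `m ∤ x`. Splitting each part `m ^ i * x` of a
partition into `m ^ i` copies of `x` yields a partition into parts not divisible by `m`; it is
inverted by regrouping the `N` copies of `x` according to the base-`m` digits of `N`. If all parts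
are at most `M`, the digits attached to `x` are truncated at the largest `T` with
`m ^ T * x ≤ M` (the top digit unbounded), and regrouping maps the partitions into parts at most
`M` not divisible by `m` bijectively onto the partitions with parts at most `M` in which every
part `b` with `m * b ≤ M` occurs fewer than `m` times.

With `M = m * n` this is Glaisher's theorem. Sorting the partitions of `n` into parts not divisible
by `m` by the residue `k ∈ [1, m - 1]` of their largest part, the class `k = m - 1` is handled by
Lin–Zhang's bijection: trade the largest part `m * j - 1` for `m * j` and apply the bijection with
`M = m * j` to the remaining parts.
-/

namespace GlaisherLinZhang

open Finset (range)

variable {m : ℕ}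

theorem pos_of_not_dvd {a : ℕ} (h : ¬ m ∣ a) : 0 < a :=
  Nat.pos_of_ne_zero fun ha => h (ha ▸ dvd_zero m)

theorem pow_mul_eq_iff (hm : 0 < m) {x : ℕ} (hx : ¬ m ∣ x) {i b : ℕ} :
    m ^ i * x = b ↔ padicValNat m b = i ∧ b.divMaxPow m = x := by
  constructor
  · rintro rfl
    have := pos_of_not_dvd hx
    exact Prod.ext_iff.mp (Nat.maxPowDvdDiv_of_pow_mul_eq (by positivity) rfl hx)
  · rintro ⟨rfl, rfl⟩
    exact Nat.pow_padicValNat_mul_divMaxPow m b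

theorem pow_mul_inj (hm : 0 < m) {x y : ℕ} (hx : ¬ m ∣ x) (hy : ¬ m ∣ y) {i k : ℕ} :
    m ^ i * x = m ^ k * y ↔ i = k ∧ x = y := by
  obtain ⟨hk, hy⟩ := (pow_mul_eq_iff hm hy).mp rfl
  rw [pow_mul_eq_iff hm hx, hk, hy, eq_comm (a := k), eq_comm (a := y)]

/-- `truncDigit m T N i` is the `i`-th base-`m` digit of `N` for `i < T`, while the top digit
`truncDigit m T N T = N / m ^ T` is unbounded. -/
def truncDigit (m : ℕ) : ℕ → ℕ → ℕ → ℕ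
  | 0, N, _ => N
  | _ + 1, N, 0 => N % m
  | T + 1, N, i + 1 => truncDigit m T (N / m) i

theorem sum_pow_mul_truncDigit (T N : ℕ) :
    ∑ i ∈ range (T + 1), m ^ i * truncDigit m T N i = N := by
  induction T generalizing N with
  | zero => simp [truncDigit]
  | succ T ih =>
    simp only [Finset.sum_range_succ' _ (T + 1), truncDigit, pow_succ', mul_assoc,
      ← Finset.mul_sum, ih]
    simpa using Nat.div_add_mod N m

theorem truncDigit_lt (hm : 0 < m) {T i : ℕ} (hi : i < T) (N : ℕ) : truncDigit m T N i < m := by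
  induction T generalizing N i with
  | zero => omega
  | succ T ih =>
    cases i with
    | zero => exact Nat.mod_lt N hm
    | succ i => exact ih (by omega) _

theorem truncDigit_zero (T i : ℕ) : truncDigit m T 0 i = 0 := by
  induction T generalizing i with
  | zero => rfl
  | succ T ih => cases i <;> simp [truncDigit, ih]

theorem truncDigit_sum_pow_mul {T : ℕ} {e : ℕ → ℕ} (he : ∀ k < T, e k < m) {i : ℕ} (hi : i ≤ T) :
    truncDigit m T (∑ k ∈ range (T + 1), m ^ k * e k) i = e i := by
  induction T generalizing e i with
  | zero => simp [truncDigit, Nat.le_zero.mp hi]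
  | succ T ih =>
    have hsum : ∑ k ∈ range (T + 2), m ^ k * e k
        = e 0 + m * ∑ k ∈ range (T + 1), m ^ k * e (k + 1) := by
      simp only [Finset.sum_range_succ' _ (T + 1), pow_succ', mul_assoc, ← Finset.mul_sum]
      ring
    have he0 : e 0 < m := he 0 (by omega)
    cases i with
    | zero => simp [truncDigit, hsum, Nat.mod_eq_of_lt he0]
    | succ i =>
      simp only [truncDigit, hsum, Nat.add_mul_div_left _ _ (by omega : 0 < m),
        Nat.div_eq_of_lt he0, zero_add]
      exact ih (fun k hk => he (k + 1) (by omega)) (by omega)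

theorem divMaxPow_le (b m : ℕ) : b.divMaxPow m ≤ b := by
  rcases Nat.eq_zero_or_pos b with rfl | hb
  · simp
  · exact Nat.le_of_dvd hb (Dvd.intro_left _ (Nat.pow_padicValNat_mul_divMaxPow m b))

def splitParts (m : ℕ) (s : Multiset ℕ) : Multiset ℕ :=
  s.bind fun b => Multiset.replicate (m ^ padicValNat m b) (b.divMaxPow m)

theorem sum_splitParts (s : Multiset ℕ) : (splitParts m s).sum = s.sum := by
  simp [splitParts, Multiset.sum_bind]

theorem mem_splitParts (hm : 0 < m) {s : Multiset ℕ} {x : ℕ} :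
    x ∈ splitParts m s ↔ ∃ b ∈ s, b.divMaxPow m = x := by
  simp [splitParts, Multiset.mem_bind, Multiset.mem_replicate, eq_comm, hm.ne']

theorem not_dvd_of_mem_splitParts (hm : 1 < m) {s : Multiset ℕ} (hs : ∀ b ∈ s, 0 < b) {x : ℕ}
    (hx : x ∈ splitParts m s) : ¬ m ∣ x := by
  obtain ⟨b, hb, rfl⟩ := (mem_splitParts (by omega)).mp hx
  exact Nat.not_dvd_divMaxPow hm (hs b hb).ne'

theorem le_of_mem_splitParts (hm : 0 < m) {s : Multiset ℕ} {M : ℕ} (hs : ∀ b ∈ s, b ≤ M)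
    {x : ℕ} (hx : x ∈ splitParts m s) : x ≤ M := by
  obtain ⟨b, hb, rfl⟩ := (mem_splitParts hm).mp hx
  exact (divMaxPow_le b m).trans (hs b hb)

theorem count_replicate_divMaxPow (hm : 1 < m) {x K b : ℕ} (hx : ¬ m ∣ x) (hb : b < m ^ K * x) :
    (Multiset.replicate (m ^ padicValNat m b) (b.divMaxPow m)).count x
      = ∑ i ∈ range K, if m ^ i * x = b then m ^ i else 0 := by
  simp only [pow_mul_eq_iff (by omega) hx, Multiset.count_replicate]
  by_cases hbx : b.divMaxPow m = x
  · have hν : padicValNat m b < K := by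
      rw [← (pow_mul_eq_iff (by omega) hx).mpr ⟨rfl, hbx⟩] at hb
      exact (Nat.pow_lt_pow_iff_right (by omega)).mp (Nat.lt_of_mul_lt_mul_right hb)
    simp [hbx, Finset.sum_ite_eq, hν]
  · simp [hbx]

theorem count_splitParts (hm : 1 < m) {x K : ℕ} (hx : ¬ m ∣ x) {s : Multiset ℕ}
    (hK : ∀ b ∈ s, b < m ^ K * x) :
    (splitParts m s).count x = ∑ i ∈ range K, m ^ i * s.count (m ^ i * x) := by
  induction s using Multiset.induction_on with
  | empty => simp [splitParts]
  | cons b s ih =>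
    rw [splitParts, Multiset.cons_bind, Multiset.count_add, ← splitParts,
      count_replicate_divMaxPow hm hx (hK b (Multiset.mem_cons_self b s)),
      ih fun c hc => hK c (Multiset.mem_cons_of_mem hc), ← Finset.sum_add_distrib]
    refine Finset.sum_congr rfl fun i _ => ?_
    rw [Multiset.count_cons]
    split_ifs <;> ring

/-- For `0 < x ≤ M`, the largest `i` with `m ^ i * x ≤ M`. -/
def mergeDepth (m M x : ℕ) : ℕ := Nat.log m (M / x)

theorem le_mergeDepth_of_pow_mul_le (hm : 1 < m) {M x i : ℕ} (hx : 0 < x) (h : m ^ i * x ≤ M) :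
    i ≤ mergeDepth m M x :=
  Nat.le_log_of_pow_le hm ((Nat.le_div_iff_mul_le hx).mpr h)

theorem pow_mul_le_of_le_mergeDepth {M x i : ℕ} (hi : i ≤ mergeDepth m M x) (hi0 : i ≠ 0) :
    m ^ i * x ≤ M := by
  have hMx : M / x ≠ 0 := by
    intro h
    simp [mergeDepth, h] at hi
    omega
  have hx : 0 < x := Nat.pos_of_ne_zero (by rintro rfl; simp at hMx)
  exact (Nat.le_div_iff_mul_le hx).mp (Nat.pow_le_of_le_log hMx hi)

theorem lt_pow_mergeDepth_succ_mul (hm : 1 < m) (M : ℕ) {x : ℕ} (hx : 0 < x) :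
    M < m ^ (mergeDepth m M x + 1) * x :=
  (Nat.div_lt_iff_lt_mul hx).mp (Nat.lt_pow_succ_log_self hm _)

def mergeParts (m M : ℕ) (t : Multiset ℕ) : Multiset ℕ :=
  ∑ x ∈ t.toFinset, ∑ i ∈ range (mergeDepth m M x + 1),
    Multiset.replicate (truncDigit m (mergeDepth m M x) (t.count x) i) (m ^ i * x)

theorem exists_of_mem_mergeParts {M : ℕ} {t : Multiset ℕ} {b : ℕ} (hb : b ∈ mergeParts m M t) :
    ∃ x ∈ t, ∃ i ≤ mergeDepth m M x, m ^ i * x = b := by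
  simp only [mergeParts, Multiset.mem_sum, Multiset.mem_replicate, Finset.mem_range,
    Multiset.mem_toFinset] at hb
  obtain ⟨x, hx, i, hi, -, rfl⟩ := hb
  exact ⟨x, hx, i, by omega, rfl⟩

theorem pos_of_mem_mergeParts (hm : 0 < m) {M : ℕ} {t : Multiset ℕ} (ht : ∀ x ∈ t, 0 < x)
    {b : ℕ} (hb : b ∈ mergeParts m M t) : 0 < b := by
  obtain ⟨x, hx, i, -, rfl⟩ := exists_of_mem_mergeParts hb
  have := ht x hx
  positivity

theorem le_of_mem_mergeParts {M : ℕ} {t : Multiset ℕ} (ht : ∀ x ∈ t, x ≤ M) {b : ℕ}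
    (hb : b ∈ mergeParts m M t) : b ≤ M := by
  obtain ⟨x, hx, i, hi, rfl⟩ := exists_of_mem_mergeParts hb
  rcases Nat.eq_zero_or_pos i with rfl | hi0
  · simpa using ht x hx
  · exact pow_mul_le_of_le_mergeDepth hi hi0.ne'

theorem count_mergeParts (hm : 0 < m) (M : ℕ) {t : Multiset ℕ} (ht : ∀ a ∈ t, ¬ m ∣ a) {x : ℕ}
    (hx : ¬ m ∣ x) (i : ℕ) :
    (mergeParts m M t).count (m ^ i * x) =
      if i ≤ mergeDepth m M x then truncDigit m (mergeDepth m M x) (t.count x) i else 0 := by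
  simp only [mergeParts, Multiset.count_sum', Multiset.count_replicate]
  have hinner : ∀ a ∈ t.toFinset, (∑ k ∈ range (mergeDepth m M a + 1),
      if m ^ k * a = m ^ i * x then truncDigit m (mergeDepth m M a) (t.count a) k else 0)
      = if a = x then (if i ≤ mergeDepth m M x then
          truncDigit m (mergeDepth m M x) (t.count x) i else 0) else 0 := by
    intro a ha
    simp only [pow_mul_inj hm (ht a (Multiset.mem_toFinset.mp ha)) hx]
    by_cases hax : a = x
    · subst hax
      simp [Finset.sum_ite_eq']
    · simp [hax]
  rw [Finset.sum_congr rfl hinner, Finset.sum_ite_eq']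
  by_cases hxt : x ∈ t
  · simp [hxt]
  · simp [hxt, truncDigit_zero]

theorem count_mergeParts_lt (hm : 1 < m) {M : ℕ} {t : Multiset ℕ} (ht : ∀ a ∈ t, ¬ m ∣ a) {b : ℕ}
    (hb : m * b ≤ M) : (mergeParts m M t).count b < m := by
  rcases Nat.eq_zero_or_pos b with rfl | hb0
  · rw [Multiset.count_eq_zero_of_notMem fun h =>
      (pos_of_mem_mergeParts (by omega) (fun a ha => pos_of_not_dvd (ht a ha)) h).ne' rfl]
    omega
  · have hx := Nat.not_dvd_divMaxPow hm hb0.ne'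
    rw [← Nat.pow_padicValNat_mul_divMaxPow m b] at hb ⊢
    rw [count_mergeParts (by omega) M ht hx]
    split_ifs with hi
    · refine truncDigit_lt (by omega) ?_ _
      rw [← mul_assoc, ← pow_succ'] at hb
      exact le_mergeDepth_of_pow_mul_le hm (pos_of_not_dvd hx) hb
    · omega

theorem splitParts_mergeParts (hm : 1 < m) {M : ℕ} {t : Multiset ℕ} (ht : ∀ a ∈ t, ¬ m ∣ a)
    (htM : ∀ a ∈ t, a ≤ M) : splitParts m (mergeParts m M t) = t := by
  ext x
  by_cases hx : m ∣ x
  · rw [Multiset.count_eq_zero_of_notMem fun h => not_dvd_of_mem_splitParts hm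
        (fun b hb => pos_of_mem_mergeParts (by omega) (fun a ha => pos_of_not_dvd (ht a ha)) hb)
        h hx,
      Multiset.count_eq_zero_of_notMem fun h => ht x h hx]
  · rw [count_splitParts hm hx fun c hc => (le_of_mem_mergeParts htM hc).trans_lt
      (lt_pow_mergeDepth_succ_mul hm M (pos_of_not_dvd hx))]
    rw [Finset.sum_congr rfl fun k hk => by
      rw [count_mergeParts (by omega) M ht hx k,
        if_pos (Nat.lt_succ_iff.mp (Finset.mem_range.mp hk))]]
    exact sum_pow_mul_truncDigit _ _

theorem mergeParts_splitParts (hm : 1 < m) {M : ℕ} {s : Multiset ℕ} (hs : ∀ a ∈ s, 0 < a)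
    (hsM : ∀ a ∈ s, a ≤ M) (hcount : ∀ b, m * b ≤ M → s.count b < m) :
    mergeParts m M (splitParts m s) = s := by
  ext b
  rcases Nat.eq_zero_or_pos b with rfl | hb
  · rw [Multiset.count_eq_zero_of_notMem fun h => (pos_of_mem_mergeParts (by omega)
        (fun a ha => pos_of_not_dvd (not_dvd_of_mem_splitParts hm hs ha)) h).ne' rfl,
      Multiset.count_eq_zero_of_notMem fun h => (hs 0 h).ne' rfl]
  · have hx := Nat.not_dvd_divMaxPow hm hb.ne'
    rw [← Nat.pow_padicValNat_mul_divMaxPow m b,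
      count_mergeParts (by omega) M (fun a ha => not_dvd_of_mem_splitParts hm hs ha) hx,
      count_splitParts hm hx fun c hc => (hsM c hc).trans_lt
        (lt_pow_mergeDepth_succ_mul hm M (pos_of_not_dvd hx))]
    split_ifs with hi
    · refine truncDigit_sum_pow_mul (fun k hk => hcount _ ?_) hi
      rw [← mul_assoc, ← pow_succ']
      exact pow_mul_le_of_le_mergeDepth (by omega) (by omega)
    · refine (Multiset.count_eq_zero_of_notMem fun h => hi ?_).symm
      exact le_mergeDepth_of_pow_mul_le hm (pos_of_not_dvd hx) (hsM _ h)

theorem sum_mergeParts (hm : 1 < m) {M : ℕ} {t : Multiset ℕ} (ht : ∀ a ∈ t, ¬ m ∣ a)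
    (htM : ∀ a ∈ t, a ≤ M) : (mergeParts m M t).sum = t.sum := by
  conv_rhs => rw [← splitParts_mergeParts hm ht htM, sum_splitParts]

def mergeEquiv (hm : 1 < m) (M : ℕ) (P : ℕ → Prop) :
    {t : Multiset ℕ // P t.sum ∧ (∀ a ∈ t, ¬ m ∣ a) ∧ ∀ a ∈ t, a ≤ M} ≃
      {s : Multiset ℕ // P s.sum ∧ (∀ a ∈ s, 0 < a) ∧ (∀ a ∈ s, a ≤ M) ∧
        ∀ b, m * b ≤ M → s.count b < m} where
  toFun t := ⟨mergeParts m M t, by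
    obtain ⟨hP, ht, htM⟩ := t.2
    exact ⟨(sum_mergeParts hm ht htM).symm ▸ hP,
      fun _ => pos_of_mem_mergeParts (by omega) fun a ha => pos_of_not_dvd (ht a ha),
      fun _ => le_of_mem_mergeParts htM, fun _ => count_mergeParts_lt hm ht⟩⟩
  invFun s := ⟨splitParts m s, by
    obtain ⟨hP, hs, hsM, -⟩ := s.2
    exact ⟨(sum_splitParts s.1).symm ▸ hP, fun _ => not_dvd_of_mem_splitParts hm hs,
      fun _ => le_of_mem_splitParts (by omega) hsM⟩⟩
  left_inv t := Subtype.ext (splitParts_mergeParts hm t.2.2.1 t.2.2.2)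
  right_inv s := Subtype.ext (mergeParts_splitParts hm s.2.2.1 s.2.2.2.1 s.2.2.2.2)

theorem card_count_lt_eq_card_not_dvd (hm : 1 < m) (n : ℕ) :
    Nat.card {s : Multiset ℕ // s.sum = n ∧ (∀ a ∈ s, 0 < a) ∧ ∀ a, s.count a < m} =
      Nat.card {s : Multiset ℕ // s.sum = n ∧ (∀ a ∈ s, 0 < a) ∧ ∀ a ∈ s, ¬ m ∣ a} := by
  have hle : ∀ s : Multiset ℕ, s.sum = n → ∀ a ∈ s, a ≤ n := fun s hs a ha =>
    hs ▸ Multiset.le_sum_of_mem ha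
  have hn : n ≤ m * n := Nat.le_mul_of_pos_left n (by omega)
  refine Nat.card_congr <| (Equiv.subtypeEquivRight fun s => ?_).trans <|
    (mergeEquiv hm (m * n) (· = n)).symm.trans (Equiv.subtypeEquivRight fun s => ?_)
  · refine ⟨fun ⟨hsum, hpos, hcount⟩ => ⟨hsum, hpos, fun a ha => (hle s hsum a ha).trans hn,
      fun b _ => hcount b⟩, fun ⟨hsum, hpos, _, hcount⟩ => ⟨hsum, hpos, fun b => ?_⟩⟩
    by_cases hb : b ∈ s
    · exact hcount b (Nat.mul_le_mul_left m (hle s hsum b hb))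
    · rw [Multiset.count_eq_zero_of_notMem hb]
      omega
  · exact ⟨fun ⟨hsum, hreg, _⟩ => ⟨hsum, fun a ha => pos_of_not_dvd (hreg a ha), hreg⟩,
      fun ⟨hsum, _, hreg⟩ => ⟨hsum, hreg, fun a ha => (hle s hsum a ha).trans hn⟩⟩

noncomputable def subtypeExistsEquivSigma {α ι : Type*} {R : ι → α → Prop}
    (huniq : ∀ i k a, R i a → R k a → i = k) : {a // ∃ i, R i a} ≃ Σ i, {a // R i a} where
  toFun a := ⟨a.2.choose, a.1, a.2.choose_spec⟩
  invFun x := ⟨x.2.1, x.1, x.2.2⟩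
  left_inv _ := rfl
  right_inv x :=
    Sigma.subtype_ext
      (huniq _ _ x.2.1 (Exists.choose_spec (⟨x.1, x.2.2⟩ : ∃ i, R i x.2.1)) x.2.2) rfl

def consEquiv {α : Type*} [DecidableEq α] (a : α) (P : Multiset α → Prop) :
    {t // P (a ::ₘ t)} ≃ {s // a ∈ s ∧ P s} where
  toFun t := ⟨a ::ₘ t, Multiset.mem_cons_self a t, t.2⟩
  invFun s := ⟨s.1.erase a, (Multiset.cons_erase s.2.1).symm ▸ s.2.2⟩
  left_inv t := Subtype.ext (Multiset.erase_cons_head a t)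
  right_inv s := Subtype.ext (Multiset.cons_erase s.2.1)

theorem finite_partitions (N : ℕ) (P : Multiset ℕ → Prop) :
    Finite {s : Multiset ℕ // s.sum = N ∧ (∀ a ∈ s, 0 < a) ∧ P s} :=
  Finite.of_injective (β := Nat.Partition N) (fun s => ⟨s.1, fun ha => s.2.2.1 _ ha, s.2.1⟩)
    fun _ _ h => Subtype.ext (congrArg Nat.Partition.parts h)

theorem card_not_dvd_eq_sum_card_largest_mod (hm : 1 < m) {n : ℕ} (hn : 0 < n) :
    Nat.card {s : Multiset ℕ // s.sum = n ∧ (∀ a ∈ s, 0 < a) ∧ ∀ a ∈ s, ¬ m ∣ a} =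
      ∑ k ∈ Finset.Icc 1 (m - 1), Nat.card {s : Multiset ℕ // s.sum = n ∧ (∀ a ∈ s, 0 < a) ∧
        (∀ a ∈ s, ¬ m ∣ a) ∧ ∃ L ∈ s, (∀ b ∈ s, b ≤ L) ∧ L % m = k} := by
  have : ∀ k, Finite {s : Multiset ℕ // s.sum = n ∧ (∀ a ∈ s, 0 < a) ∧
      (∀ a ∈ s, ¬ m ∣ a) ∧ ∃ L ∈ s, (∀ b ∈ s, b ≤ L) ∧ L % m = k} :=
    fun k => finite_partitions n _
  rw [← Finset.sum_coe_sort, ← Nat.card_sigma]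
  refine Nat.card_congr <| (Equiv.subtypeEquivRight fun s => ?_).trans <|
    subtypeExistsEquivSigma (ι := Finset.Icc 1 (m - 1)) fun k k' s hk hk' => ?_
  · refine ⟨fun ⟨hsum, hpos, hreg⟩ => ?_, fun ⟨_, hsum, hpos, hreg, _⟩ => ⟨hsum, hpos, hreg⟩⟩
    have hs : s ≠ 0 := by rintro rfl; simp at hsum; omega
    obtain ⟨L, hL, hLmax⟩ := Multiset.exists_max_image id hs
    have hLm : L % m ≠ 0 := fun h => hreg L hL (Nat.dvd_of_mod_eq_zero h)
    have := Nat.mod_lt L (by omega : 0 < m)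
    exact ⟨⟨L % m, Finset.mem_Icc.mpr ⟨by omega, by omega⟩⟩, hsum, hpos, hreg, L, hL, hLmax, rfl⟩
  · obtain ⟨-, -, -, L, hL, hLmax, hk⟩ := hk
    obtain ⟨-, -, -, L', hL', hL'max, hk'⟩ := hk'
    have := IsGreatest.unique (s := {b | b ∈ s}) ⟨hL, hLmax⟩ ⟨hL', hL'max⟩
    exact Subtype.ext (by rw [← hk, ← hk', this])

def largestPartEquiv (hm : 1 < m) (n j : ℕ) :
    {s : Multiset ℕ // m * j + (m - 1) ∈ s ∧ s.sum = n ∧ (∀ a ∈ s, 0 < a) ∧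
      (∀ a ∈ s, ¬ m ∣ a) ∧ ∀ b ∈ s, b ≤ m * j + (m - 1)} ≃
    {u : Multiset ℕ // m * (j + 1) ∈ u ∧ u.sum = n + 1 ∧ (∀ a ∈ u, 0 < a) ∧
      (∀ b ∈ u, b ≤ m * (j + 1)) ∧ ∀ b ∈ u, b ≤ j + 1 → u.count b < m} := by
  have hM : m * (j + 1) = m * j + (m - 1) + 1 := by rw [mul_add]; omega
  have hjM : j + 1 < m * (j + 1) := by nlinarith
  refine (consEquiv _ _).symm.trans <| (Equiv.subtypeEquivRight fun t => ?_).trans <|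
    (mergeEquiv hm (m * (j + 1)) (fun N => m * (j + 1) + N = n + 1)).trans <|
    (Equiv.subtypeEquivRight fun t => ?_).trans (consEquiv _ _)
  · have hL : ¬ m ∣ m * j + (m - 1) := by
      rw [Nat.dvd_add_right (dvd_mul_right m j)]
      exact Nat.not_dvd_of_pos_of_lt (by omega) (by omega)
    have hle : ∀ b, ¬ m ∣ b → (b ≤ m * j + (m - 1) ↔ b ≤ m * (j + 1)) := fun b hb => by
      have : b ≠ m * (j + 1) := fun h => hb (h ▸ dvd_mul_right m _)
      omega
    simp only [Multiset.sum_cons, Multiset.forall_mem_cons]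
    constructor
    · rintro ⟨hsum, -, ⟨-, hreg⟩, -, hbound⟩
      exact ⟨by omega, hreg, fun b hb => (hle b (hreg b hb)).mp (hbound b hb)⟩
    · rintro ⟨hsum, hreg, hbound⟩
      exact ⟨by omega, ⟨by omega, fun a ha => pos_of_not_dvd (hreg a ha)⟩, ⟨hL, hreg⟩, le_rfl,
        fun b hb => (hle b (hreg b hb)).mpr (hbound b hb)⟩
  · simp only [Multiset.sum_cons, Multiset.forall_mem_cons]
    constructor
    · rintro ⟨hsum, hpos, hbound, hcount⟩
      refine ⟨hsum, ⟨by omega, hpos⟩, ⟨le_rfl, hbound⟩, fun h => by omega, fun b _ hb => ?_⟩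
      rw [Multiset.count_cons_of_ne (by omega)]
      exact hcount b ((Nat.mul_le_mul_left_iff (by omega)).mpr hb)
    · rintro ⟨hsum, ⟨-, hpos⟩, ⟨-, hbound⟩, -, hcount⟩
      refine ⟨hsum, hpos, hbound, fun b hb => ?_⟩
      rw [Nat.mul_le_mul_left_iff (by omega)] at hb
      by_cases hbt : b ∈ t
      · simpa [Multiset.count_cons_of_ne (by omega : b ≠ m * (j + 1))] using hcount b hbt hb
      · rw [Multiset.count_eq_zero_of_notMem hbt]
        omega

theorem card_largest_mod_eq_sub_one_eq_card_largest_mul (hm : 1 < m) (n : ℕ) :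
    Nat.card {s : Multiset ℕ // s.sum = n ∧ (∀ a ∈ s, 0 < a) ∧ (∀ a ∈ s, ¬ m ∣ a) ∧
      ∃ L ∈ s, (∀ b ∈ s, b ≤ L) ∧ L % m = m - 1} =
    Nat.card {s : Multiset ℕ // s.sum = n + 1 ∧ (∀ a ∈ s, 0 < a) ∧
      ∃ j : ℕ, m * j ∈ s ∧ (∀ b ∈ s, b ≤ m * j) ∧ ∀ b ∈ s, b ≤ j → s.count b < m} := by
  refine Nat.card_congr <| (Equiv.subtypeEquivRight fun s => ?_).trans <|
    (subtypeExistsEquivSigma fun j j' s hj hj' => ?_).trans <|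
    (Equiv.sigmaCongrRight (largestPartEquiv hm n)).trans <|
    (subtypeExistsEquivSigma fun j j' u hj hj' => ?_).symm.trans
      (Equiv.subtypeEquivRight fun u => ?_)
  · constructor
    · rintro ⟨hsum, hpos, hreg, L, hL, hLmax, hLm⟩
      have hLeq : m * (L / m) + (m - 1) = L := hLm ▸ Nat.div_add_mod L m
      refine ⟨L / m, ?_⟩
      rw [hLeq]
      exact ⟨hL, hsum, hpos, hreg, hLmax⟩
    · rintro ⟨j, hL, hsum, hpos, hreg, hLmax⟩
      refine ⟨hsum, hpos, hreg, _, hL, hLmax, ?_⟩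
      rw [Nat.mul_comm, Nat.mul_add_mod_of_lt (by omega)]
  · have := IsGreatest.unique (s := {b | b ∈ s}) ⟨hj.1, hj.2.2.2.2⟩ ⟨hj'.1, hj'.2.2.2.2⟩
    exact Nat.eq_of_mul_eq_mul_left (by omega : 0 < m) (by omega)
  · have := IsGreatest.unique (s := {b | b ∈ u}) ⟨hj.1, hj.2.2.2.1⟩ ⟨hj'.1, hj'.2.2.2.1⟩
    exact Nat.succ_injective (Nat.eq_of_mul_eq_mul_left (by omega : 0 < m) this)
  · constructor
    · rintro ⟨j, hM, hsum, hpos, hMmax, hcount⟩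
      exact ⟨hsum, hpos, j + 1, hM, hMmax, hcount⟩
    · rintro ⟨hsum, hpos, j, hM, hMmax, hcount⟩
      have hj : j ≠ 0 := by
        rintro rfl
        simpa using hpos _ hM
      obtain ⟨j, rfl⟩ := Nat.exists_eq_add_one_of_ne_zero hj
      exact ⟨j, hM, hsum, hpos, hMmax, hcount⟩

end GlaisherLinZhang

/-- Theorem 1.8: for `m ≥ 2` and `n ≥ 1`,
`Aₘ(n) = ∑_{k=1}^{m-2} Bₘ⁽ᵏ⁾(n) + Cₘ(n+1)`, where `Aₘ(n)` counts partitions of `n`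
with each part occurring fewer than `m` times, `Bₘ⁽ᵏ⁾(n)` counts partitions of `n` into
parts not divisible by `m` with largest part `≡ k (mod m)`, and `Cₘ(n+1)` counts
partitions of `n+1` with largest part `m*j` and all parts `≤ j` occurring fewer than
`m` times. -/
theorem glaisher_lin_zhang_combined (m : ℕ) (hm : 2 ≤ m) (n : ℕ) (hn : 0 < n) :
    Nat.card {s : Multiset ℕ // s.sum = n ∧ (∀ a ∈ s, 0 < a) ∧ ∀ a, s.count a < m} =
    (∑ k ∈ Finset.Icc 1 (m - 2),
      Nat.card {s : Multiset ℕ // s.sum = n ∧ (∀ a ∈ s, 0 < a) ∧ (∀ a ∈ s, ¬ m ∣ a) ∧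
        ∃ L ∈ s, (∀ b ∈ s, b ≤ L) ∧ L % m = k}) +
    Nat.card {s : Multiset ℕ // s.sum = n + 1 ∧ (∀ a ∈ s, 0 < a) ∧
      ∃ j : ℕ, m * j ∈ s ∧ (∀ b ∈ s, b ≤ m * j) ∧ ∀ b ∈ s, b ≤ j → s.count b < m} := by
  open GlaisherLinZhang in
  rw [card_count_lt_eq_card_not_dvd hm, card_not_dvd_eq_sum_card_largest_mod hm hn,
    ← card_largest_mod_eq_sub_one_eq_card_largest_mul hm, show m - 1 = m - 2 + 1 by omega,
    Finset.sum_Icc_succ_top (by omega)]
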